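/- arXiv:1804.03714 — 4 statements merged into one kernel-verified Lean document; each statement's English description precedes it below -/
import Mathlib

section
/- For x > -1 and λ > 0, the function F(x) = Γ(x+1, λ)/Γ(x+1), where Γ(x, λ) = ∫_λ^∞ e^{-s} s^{x-1} ds is the upper incomplete Gamma function, is non-decreasing in x. -/
/-!
Split `Γ(a) = γ(a, λ) + Γ(a, λ)` at `λ`. Then `F = Γ(·, λ) / (γ(·, λ) + Γ(·, λ))`, and
`F(a) ≤ F(b)` reduces to `Γ(a, λ) γ(b, λ) ≤ Γ(b, λ) γ(a, λ)`. Writing both sides as integrals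
over `s > λ ≥ t`, this follows pointwise from `s^(a-1) t^(b-1) ≤ s^(b-1) t^(a-1)`, i.e. from
`(t / s)^(b-a) ≤ 1`.
-/

open MeasureTheory Set

/-- Upper incomplete Gamma function `Γ(a, λ) = ∫_λ^∞ e^{-s} s^{a-1} ds`. -/
noncomputable def incGamma (a lam : ℝ) : ℝ :=
  ∫ s in Set.Ioi lam, Real.exp (-s) * s ^ (a - 1)

noncomputable def lowerIncGamma (a lam : ℝ) : ℝ :=
  ∫ s in Ioc 0 lam, Real.exp (-s) * s ^ (a - 1)

lemma rpow_mul_rpow_le_rpow_mul_rpow {s t a b : ℝ} (ht : 0 < t) (hts : t ≤ s) (hab : a ≤ b) :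
    s ^ a * t ^ b ≤ s ^ b * t ^ a := by
  have hs : 0 < s := ht.trans_le hts
  calc s ^ a * t ^ b = s ^ a * t ^ a * t ^ (b - a) := by
        rw [mul_assoc, ← Real.rpow_add ht, add_sub_cancel]
    _ ≤ s ^ a * t ^ a * s ^ (b - a) := by
        gcongr
    _ = s ^ b * t ^ a := by
        rw [mul_right_comm, ← Real.rpow_add hs, add_sub_cancel]

lemma gammaIntegrand_mul_le {s t a b : ℝ} (ht : 0 < t) (hts : t ≤ s) (hab : a ≤ b) :
    Real.exp (-s) * s ^ (a - 1) * (Real.exp (-t) * t ^ (b - 1)) ≤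
      Real.exp (-s) * s ^ (b - 1) * (Real.exp (-t) * t ^ (a - 1)) := by
  have key := rpow_mul_rpow_le_rpow_mul_rpow ht hts (sub_le_sub_right hab 1)
  calc Real.exp (-s) * s ^ (a - 1) * (Real.exp (-t) * t ^ (b - 1))
      = Real.exp (-s) * Real.exp (-t) * (s ^ (a - 1) * t ^ (b - 1)) := by ring
    _ ≤ Real.exp (-s) * Real.exp (-t) * (s ^ (b - 1) * t ^ (a - 1)) := by gcongr
    _ = Real.exp (-s) * s ^ (b - 1) * (Real.exp (-t) * t ^ (a - 1)) := by ring

lemma integrableOn_gammaIntegrand_Ioi {a lam : ℝ} (ha : 0 < a) (hlam : 0 ≤ lam) :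
    IntegrableOn (fun s => Real.exp (-s) * s ^ (a - 1)) (Ioi lam) :=
  (Real.GammaIntegral_convergent ha).mono_set (Ioi_subset_Ioi hlam)

lemma integrableOn_gammaIntegrand_Ioc {a : ℝ} (ha : 0 < a) (lam : ℝ) :
    IntegrableOn (fun s => Real.exp (-s) * s ^ (a - 1)) (Ioc 0 lam) :=
  (Real.GammaIntegral_convergent ha).mono_set Ioc_subset_Ioi_self

lemma Gamma_eq_lowerIncGamma_add_incGamma {a lam : ℝ} (ha : 0 < a) (hlam : 0 ≤ lam) :
    Real.Gamma a = lowerIncGamma a lam + incGamma a lam := by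
  rw [Real.Gamma_eq_integral ha, ← Ioc_union_Ioi_eq_Ioi hlam,
    setIntegral_union (Ioc_disjoint_Ioi le_rfl) measurableSet_Ioi
      (integrableOn_gammaIntegrand_Ioc ha lam) (integrableOn_gammaIntegrand_Ioi ha hlam)]
  rfl

lemma incGamma_mul_lowerIncGamma_le {a b lam : ℝ} (ha : 0 < a) (hab : a ≤ b) (hlam : 0 ≤ lam) :
    incGamma a lam * lowerIncGamma b lam ≤ incGamma b lam * lowerIncGamma a lam := by
  have hb : 0 < b := ha.trans_le hab
  have inner : ∀ s ∈ Ioi lam, Real.exp (-s) * s ^ (a - 1) * lowerIncGamma b lam ≤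
      Real.exp (-s) * s ^ (b - 1) * lowerIncGamma a lam := by
    intro s hs
    rw [lowerIncGamma, lowerIncGamma, ← integral_const_mul, ← integral_const_mul]
    exact setIntegral_mono_on ((integrableOn_gammaIntegrand_Ioc hb lam).const_mul _)
      ((integrableOn_gammaIntegrand_Ioc ha lam).const_mul _) measurableSet_Ioc
      fun t ht => gammaIntegrand_mul_le ht.1 (ht.2.trans (le_of_lt hs)) hab
  rw [incGamma, incGamma, ← integral_mul_const, ← integral_mul_const]
  exact setIntegral_mono_on ((integrableOn_gammaIntegrand_Ioi ha hlam).mul_const _)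
    ((integrableOn_gammaIntegrand_Ioi hb hlam).mul_const _) measurableSet_Ioi inner

lemma incGamma_div_Gamma_le {a b lam : ℝ} (ha : 0 < a) (hab : a ≤ b) (hlam : 0 ≤ lam) :
    incGamma a lam / Real.Gamma a ≤ incGamma b lam / Real.Gamma b := by
  have hb : 0 < b := ha.trans_le hab
  rw [div_le_div_iff₀ (Real.Gamma_pos_of_pos ha) (Real.Gamma_pos_of_pos hb),
    Gamma_eq_lowerIncGamma_add_incGamma ha hlam, Gamma_eq_lowerIncGamma_add_incGamma hb hlam]
  nlinarith [incGamma_mul_lowerIncGamma_le ha hab hlam]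

/-- For `λ > 0`, the continuous Poisson CDF `F(x) = Γ(x+1, λ)/Γ(x+1)` is
non-decreasing in `x` on `(-1, ∞)`. -/
theorem contPoisson_cdf_monotone (lam : ℝ) (hlam : 0 < lam) :
    MonotoneOn (fun x : ℝ => incGamma (x + 1) lam / Real.Gamma (x + 1))
      (Set.Ioi (-1 : ℝ)) := by
  intro x hx y _ hxy
  exact incGamma_div_Gamma_le (neg_lt_iff_pos_add.mp hx) (by linarith) hlam.le
end

section
/- For λ > 0, the function F(x) = Γ(x+1, λ)/Γ(x+1) satisfies F(x) → 0 as x → -1 from above and F(x) → 1 as x → ∞; hence F is the cumulative distribution function of a continuous random variable on (-1, ∞). -/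
open MeasureTheory Set Filter

/-!
Near `x = -1` the numerator stays bounded, `Γ(x+1, λ) ≤ λ^x e^{-λ}`, while `1/Γ(x+1) → 0`
because `1/Γ` is entire and vanishes at `0`.
As `x → ∞`, split `Γ(x+1) = ∫_0^λ e^{-s} s^x ds + Γ(x+1, λ)`: the first piece is at most `λ^{x+1}`,
whereas `Γ(x+1) ≥ e^{-(2λ+1)} (2λ)^x`, coming from the integrand on `(2λ, 2λ+1]`; so the ratio
of the first piece to `Γ(x+1)` is `O(2^{-x})`.
-/

open Real Topology

lemma Real.continuous_inv_Gamma : Continuous fun x : ℝ => (Gamma x)⁻¹ := by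
  have h : (fun x : ℝ => (Gamma x)⁻¹) = fun x : ℝ => ((Complex.Gamma x)⁻¹).re := by
    ext x
    rw [Complex.Gamma_ofReal, ← Complex.ofReal_inv, Complex.ofReal_re]
  rw [h]
  exact Complex.continuous_re.comp
    (Complex.differentiable_one_div_Gamma.continuous.comp Complex.continuous_ofReal)

lemma incGamma_add_one (x lam : ℝ) :
    incGamma (x + 1) lam = ∫ s in Ioi lam, exp (-s) * s ^ x := by
  simp only [incGamma, add_sub_cancel_right]

lemma integrableOn_exp_neg_mul_rpow_Ioi_zero {x : ℝ} (hx : -1 < x) :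
    IntegrableOn (fun s : ℝ => exp (-s) * s ^ x) (Ioi 0) := by
  simpa using GammaIntegral_convergent (show 0 < x + 1 by linarith)

lemma exp_neg_mul_rpow_nonneg {s : ℝ} (hs : 0 ≤ s) (x : ℝ) : 0 ≤ exp (-s) * s ^ x := by
  positivity

lemma incGamma_nonneg (a : ℝ) {lam : ℝ} (hlam : 0 ≤ lam) : 0 ≤ incGamma a lam :=
  setIntegral_nonneg measurableSet_Ioi fun _ hs =>
    exp_neg_mul_rpow_nonneg (hlam.trans (le_of_lt hs)) _

lemma incGamma_add_one_le {x lam : ℝ} (hx : x ≤ 0) (hlam : 0 < lam) :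
    incGamma (x + 1) lam ≤ lam ^ x * exp (-lam) := by
  rw [incGamma_add_one, ← integral_exp_neg_Ioi, ← integral_const_mul]
  have hexp : IntegrableOn (fun s => exp (-s)) (Ioi lam) := by
    simpa using exp_neg_integrableOn_Ioi lam one_pos
  refine integral_mono_of_nonneg ?_ (hexp.const_mul _) ?_
  · filter_upwards [ae_restrict_mem measurableSet_Ioi] with s (hs : lam < s)
    exact exp_neg_mul_rpow_nonneg (hlam.trans hs).le x
  · filter_upwards [ae_restrict_mem measurableSet_Ioi] with s (hs : lam < s)
    rw [mul_comm]
    exact mul_le_mul_of_nonneg_right (rpow_le_rpow_of_nonpos hlam hs.le hx) (exp_pos _).le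

lemma Gamma_add_one_eq_integral_Ioc_add_incGamma {x lam : ℝ} (hx : -1 < x) (hlam : 0 ≤ lam) :
    Gamma (x + 1) = (∫ s in Ioc 0 lam, exp (-s) * s ^ x) + incGamma (x + 1) lam := by
  have hint := integrableOn_exp_neg_mul_rpow_Ioi_zero hx
  rw [Gamma_eq_integral (by linarith), add_sub_cancel_right, incGamma_add_one,
    ← Ioc_union_Ioi_eq_Ioi hlam, setIntegral_union (Ioc_disjoint_Ioi le_rfl) measurableSet_Ioi
      (hint.mono_set Ioc_subset_Ioi_self) (hint.mono_set (Ioi_subset_Ioi hlam))]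

lemma integral_Ioc_exp_neg_mul_rpow_le {x lam : ℝ} (hx : 0 ≤ x) (hlam : 0 ≤ lam) :
    ∫ s in Ioc 0 lam, exp (-s) * s ^ x ≤ lam * lam ^ x := by
  calc ∫ s in Ioc 0 lam, exp (-s) * s ^ x ≤ ∫ _ in Ioc 0 lam, lam ^ x := by
        refine integral_mono_of_nonneg ?_ (integrableOn_const (by simp)) ?_
        · filter_upwards [ae_restrict_mem measurableSet_Ioc] with s hs
          exact exp_neg_mul_rpow_nonneg hs.1.le x
        · filter_upwards [ae_restrict_mem measurableSet_Ioc] with s hs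
          calc exp (-s) * s ^ x ≤ 1 * lam ^ x :=
                mul_le_mul (exp_le_one_iff.mpr (by linarith [hs.1]))
                  (rpow_le_rpow hs.1.le hs.2 hx) (rpow_nonneg hs.1.le x) zero_le_one
            _ = lam ^ x := one_mul _
    _ = lam * lam ^ x := by
        rw [setIntegral_const, volume_real_Ioc_of_le hlam, sub_zero, smul_eq_mul]

lemma rpow_mul_exp_neg_le_Gamma_add_one {x M : ℝ} (hx : 0 ≤ x) (hM : 0 ≤ M) :
    M ^ x * exp (-(M + 1)) ≤ Gamma (x + 1) := by
  have hint := integrableOn_exp_neg_mul_rpow_Ioi_zero (show -1 < x by linarith)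
  have hsub : Ioc M (M + 1) ⊆ Ioi 0 := fun s hs => hM.trans_lt hs.1
  calc M ^ x * exp (-(M + 1)) = ∫ _ in Ioc M (M + 1), exp (-(M + 1)) * M ^ x := by
        rw [setIntegral_const, volume_real_Ioc_of_le (by linarith), smul_eq_mul]
        ring
    _ ≤ ∫ s in Ioc M (M + 1), exp (-s) * s ^ x := by
        refine setIntegral_mono_on (integrableOn_const (by simp)) (hint.mono_set hsub)
          measurableSet_Ioc fun s hs => ?_
        gcongr
        · exact hs.2
        · exact hs.1.le
    _ ≤ ∫ s in Ioi 0, exp (-s) * s ^ x := by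
        refine setIntegral_mono_set hint ?_ hsub.eventuallyLE
        filter_upwards [ae_restrict_mem measurableSet_Ioi] with s (hs : 0 < s)
        exact exp_neg_mul_rpow_nonneg hs.le x
    _ = Gamma (x + 1) := by
        rw [Gamma_eq_integral (by linarith), add_sub_cancel_right]

lemma tendsto_rpow_div_Gamma_add_one_atTop {c : ℝ} (hc : 0 < c) :
    Tendsto (fun x => c ^ x / Gamma (x + 1)) atTop (𝓝 0) := by
  have hhalf : Tendsto (fun x : ℝ => exp (2 * c + 1) * (1 / 2) ^ x) atTop (𝓝 0) := by
    simpa using (tendsto_rpow_atTop_of_base_lt_one (1 / 2) (by norm_num) (by norm_num)).const_mul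
      (exp (2 * c + 1))
  refine tendsto_of_tendsto_of_tendsto_of_le_of_le' tendsto_const_nhds hhalf ?_ ?_
  · filter_upwards [eventually_ge_atTop 0] with x hx
    have := Gamma_pos_of_pos (show 0 < x + 1 by linarith)
    positivity
  · filter_upwards [eventually_ge_atTop 0] with x hx
    have hlow := rpow_mul_exp_neg_le_Gamma_add_one hx (show 0 ≤ 2 * c by positivity)
    have hpos : 0 < (2 * c) ^ x * exp (-(2 * c + 1)) := by positivity
    calc c ^ x / Gamma (x + 1) ≤ c ^ x / ((2 * c) ^ x * exp (-(2 * c + 1))) := by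
          gcongr
      _ = exp (2 * c + 1) * (1 / 2) ^ x := by
          rw [mul_rpow zero_le_two hc.le, div_rpow zero_le_one zero_le_two, one_rpow, exp_neg]
          have : 0 < c ^ x := by positivity
          have : 0 < (2 : ℝ) ^ x := by positivity
          field_simp

lemma tendsto_incGamma_div_Gamma_nhdsGT_neg_one {lam : ℝ} (hlam : 0 < lam) :
    Tendsto (fun x : ℝ => incGamma (x + 1) lam / Gamma (x + 1)) (𝓝[>] (-1)) (𝓝 0) := by
  have hbound : Tendsto (fun x : ℝ => lam ^ x * exp (-lam) * (Gamma (x + 1))⁻¹)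
      (𝓝[>] (-1)) (𝓝 0) := by
    have hcont : ContinuousAt (fun x : ℝ => lam ^ x * exp (-lam) * (Gamma (x + 1))⁻¹) (-1) :=
      ((continuousAt_const_rpow hlam.ne').mul continuousAt_const).mul
        (continuous_inv_Gamma.comp (continuous_add_const 1)).continuousAt
    simpa [Gamma_zero] using hcont.tendsto.mono_left nhdsWithin_le_nhds
  refine tendsto_of_tendsto_of_tendsto_of_le_of_le' tendsto_const_nhds hbound ?_ ?_
  · filter_upwards [self_mem_nhdsWithin] with x (hx : -1 < x)
    exact div_nonneg (incGamma_nonneg _ hlam.le) (Gamma_pos_of_pos (by linarith)).le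
  · filter_upwards [Ioo_mem_nhdsGT (show (-1 : ℝ) < 0 by norm_num)] with x hx
    rw [div_eq_mul_inv]
    have := Gamma_pos_of_pos (show 0 < x + 1 by linarith [hx.1])
    gcongr
    exact incGamma_add_one_le hx.2.le hlam

lemma tendsto_incGamma_div_Gamma_atTop {lam : ℝ} (hlam : 0 < lam) :
    Tendsto (fun x : ℝ => incGamma (x + 1) lam / Gamma (x + 1)) atTop (𝓝 1) := by
  have hlower : Tendsto (fun x => (∫ s in Ioc 0 lam, exp (-s) * s ^ x) / Gamma (x + 1))
      atTop (𝓝 0) := by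
    have hbound := (tendsto_rpow_div_Gamma_add_one_atTop hlam).const_mul lam
    rw [mul_zero] at hbound
    refine tendsto_of_tendsto_of_tendsto_of_le_of_le' tendsto_const_nhds hbound ?_ ?_
    · filter_upwards [eventually_ge_atTop 0] with x hx
      exact div_nonneg (setIntegral_nonneg measurableSet_Ioc fun s hs =>
        exp_neg_mul_rpow_nonneg hs.1.le x) (Gamma_pos_of_pos (by linarith)).le
    · filter_upwards [eventually_ge_atTop 0] with x hx
      have := Gamma_pos_of_pos (show 0 < x + 1 by linarith)
      rw [← mul_div_assoc]
      gcongr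
      exact integral_Ioc_exp_neg_mul_rpow_le hx hlam.le
  have hone := (tendsto_const_nhds (x := (1 : ℝ))).sub hlower
  rw [sub_zero] at hone
  refine hone.congr' ?_
  filter_upwards [eventually_ge_atTop 0] with x hx
  have := (Gamma_pos_of_pos (show 0 < x + 1 by linarith)).ne'
  rw [eq_div_iff this, sub_mul, one_mul, div_mul_cancel₀ _ this,
    Gamma_add_one_eq_integral_Ioc_add_incGamma (by linarith) hlam.le]
  ring

/-- For `λ > 0`, the function `F(x) = Γ(x+1, λ)/Γ(x+1)` tends to `0` as `x → -1⁺`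
and to `1` as `x → ∞`. -/
theorem contPoisson_cdf_limits (lam : ℝ) (hlam : 0 < lam) :
    Tendsto (fun x : ℝ => incGamma (x + 1) lam / Real.Gamma (x + 1))
        (nhdsWithin (-1 : ℝ) (Set.Ioi (-1 : ℝ))) (nhds 0) ∧
      Tendsto (fun x : ℝ => incGamma (x + 1) lam / Real.Gamma (x + 1))
        atTop (nhds 1) :=
  ⟨tendsto_incGamma_div_Gamma_nhdsGT_neg_one hlam, tendsto_incGamma_div_Gamma_atTop hlam⟩
end

section
/- For fixed s > -1 and λ > 0, let F_Y^{(n)}(x) = B(x+1, n-x, p_n)/B(x+1, n-x) be the Continuous Binomial CDF with parameters n and p_n, where n p_n → λ as n → ∞ and p_n → 0. Then F_Y^{(n)}(s) → Γ(s+1, λ)/Γ(s+1), the Continuous Poisson CDF, as n → ∞. -/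
open MeasureTheory Set Filter

/-- Complete Beta function `B(a,b) = ∫_0^1 t^{a-1}(1-t)^{b-1} dt`. -/
noncomputable def betaFun (a b : ℝ) : ℝ :=
  ∫ t in Set.Ioo (0 : ℝ) 1, t ^ (a - 1) * (1 - t) ^ (b - 1)

/-- Upper incomplete Beta function `B(a,b,x) = ∫_x^1 t^{a-1}(1-t)^{b-1} dt`. -/
noncomputable def betaInc (a b x : ℝ) : ℝ :=
  ∫ t in Set.Ioo x (1 : ℝ), t ^ (a - 1) * (1 - t) ^ (b - 1)

open Real Topology

/-!
Substituting `u = n t` gives `n^{s+1} B(s+1, n-s, x) = ∫_{nx}^{n} u^s (1 - u/n)^{n-s-1} du`, and the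
complete Beta function is the case `x = 0`. Pointwise `(1 - u/n)^{n-s-1} → e^{-u}`, and
`1 - x ≤ e^{-x}` gives the domination `(1 - u/n)^{n-s-1} ≤ e^{-u/2}` once `n ≥ 2(s+1)`, so by
dominated convergence these integrals tend to `Γ(s+1, λ)` (for `x = pₙ`) and `Γ(s+1, 0) = Γ(s+1)`
(for `x = 0`). The common factor `n^{s+1}` cancels in the ratio.
-/

lemma setIntegral_Ioo_mul_rpow_mul_one_sub_div_rpow (s c : ℝ) {n x : ℝ} (hn : 0 < n)
    (hx0 : 0 ≤ x) (hx1 : x ≤ 1) :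
    ∫ u in Ioo (n * x) n, u ^ s * (1 - u / n) ^ c
      = n ^ (s + 1) * ∫ t in Ioo x 1, t ^ s * (1 - t) ^ c := by
  have hnx : n * x ≤ n := mul_le_of_le_one_right hn.le hx1
  rw [← integral_Ioc_eq_integral_Ioo, ← integral_Ioc_eq_integral_Ioo,
    ← intervalIntegral.integral_of_le hnx, ← intervalIntegral.integral_of_le hx1]
  have hscale := intervalIntegral.smul_integral_comp_mul_left (a := x) (b := 1)
    (fun u : ℝ => u ^ s * (1 - u / n) ^ c) n
  rw [mul_one] at hscale
  rw [← hscale, smul_eq_mul, rpow_add_one hn.ne', mul_comm (n ^ s) n, mul_assoc]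
  congr 1
  rw [← intervalIntegral.integral_const_mul]
  refine intervalIntegral.integral_congr fun t (ht : t ∈ uIcc x 1) => ?_
  rw [uIcc_of_le hx1] at ht
  simp only [mul_div_cancel_left₀ _ hn.ne', mul_rpow hn.le (hx0.trans ht.1), mul_assoc]

lemma rpow_mul_betaInc_eq_setIntegral (s : ℝ) {n x : ℝ} (hn : 0 < n) (hx0 : 0 ≤ x)
    (hx1 : x ≤ 1) :
    n ^ (s + 1) * betaInc (s + 1) (n - s) x
      = ∫ u in Ioo (n * x) n, u ^ s * (1 - u / n) ^ (n - s - 1) := by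
  rw [setIntegral_Ioo_mul_rpow_mul_one_sub_div_rpow _ _ hn hx0 hx1, betaInc, add_sub_cancel_right]

lemma betaFun_eq_betaInc_zero (a b : ℝ) : betaFun a b = betaInc a b 0 := rfl

lemma Gamma_eq_incGamma_zero {a : ℝ} (ha : 0 < a) : Gamma a = incGamma a 0 :=
  Gamma_eq_integral ha

lemma tendsto_one_sub_div_rpow_sub (u c : ℝ) :
    Tendsto (fun n : ℕ => (1 - u / n) ^ ((n : ℝ) - c)) atTop (𝓝 (exp (-u))) := by
  have hpow : Tendsto (fun n : ℕ => (1 + -u / n) ^ (n : ℝ)) atTop (𝓝 (exp (-u))) :=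
    (tendsto_one_add_div_rpow_exp (-u)).comp tendsto_natCast_atTop_atTop
  have hbase : Tendsto (fun n : ℕ => 1 - u / n) atTop (𝓝 1) := by
    simpa using tendsto_const_nhds.sub (tendsto_const_div_atTop_nhds_zero_nat u)
  have hcorr : Tendsto (fun n : ℕ => (1 - u / n) ^ c) atTop (𝓝 1) := by
    simpa using hbase.rpow_const (Or.inl one_ne_zero)
  refine (div_one (exp (-u)) ▸ hpow.div hcorr one_ne_zero).congr' ?_
  filter_upwards [hbase.eventually (lt_mem_nhds zero_lt_one)] with n hn
  simp only [Pi.div_apply, rpow_sub hn, neg_div, ← sub_eq_add_neg]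

lemma one_sub_rpow_le_exp_neg_mul {x c : ℝ} (hx : x ≤ 1) (hc : 0 ≤ c) :
    (1 - x) ^ c ≤ exp (-(x * c)) :=
  calc (1 - x) ^ c ≤ exp (-x) ^ c := rpow_le_rpow (by linarith) (one_sub_le_exp_neg x) hc
    _ = exp (-(x * c)) := by rw [← exp_mul, neg_mul]

lemma one_sub_div_rpow_le_exp_neg_half {s n u : ℝ} (hn : 2 * (s + 1) ≤ n) (hn0 : 0 < n)
    (hu0 : 0 ≤ u) (hun : u ≤ n) :
    (1 - u / n) ^ (n - s - 1) ≤ exp (-(1 / 2) * u) := by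
  refine (one_sub_rpow_le_exp_neg_mul (div_le_one_of_le₀ hun hn0.le) (by linarith)).trans ?_
  rw [exp_le_exp, neg_mul, neg_le_neg_iff, div_mul_eq_mul_div u n, le_div_iff₀ hn0]
  nlinarith

lemma tendsto_indicator_Ioo_of_ne {ι : Type*} {l : Filter ι} {a b : ι → ℝ} {a₀ u : ℝ}
    {f : ι → ℝ → ℝ} {g : ℝ → ℝ} (ha : Tendsto a l (𝓝 a₀)) (hb : Tendsto b l atTop)
    (hu : u ≠ a₀) (hf : Tendsto (fun i => f i u) l (𝓝 (g u))) :
    Tendsto (fun i => (Ioo (a i) (b i)).indicator (f i) u) l (𝓝 ((Ioi a₀).indicator g u)) := by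
  rcases hu.lt_or_gt with hlt | hgt
  · rw [indicator_of_notMem (show u ∉ Ioi a₀ from not_lt.2 hlt.le)]
    refine tendsto_const_nhds.congr' ?_
    filter_upwards [ha.eventually_const_lt hlt] with i hi
    exact (indicator_of_notMem (fun hmem => hi.not_gt hmem.1) _).symm
  · rw [indicator_of_mem (show u ∈ Ioi a₀ from hgt)]
    refine hf.congr' ?_
    filter_upwards [ha.eventually_lt_const hgt, hb.eventually_gt_atTop u] with i hai hbi
    exact (indicator_of_mem (show u ∈ Ioo (a i) (b i) from ⟨hai, hbi⟩) _).symm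

theorem tendsto_setIntegral_Ioo_rpow_mul_one_sub_div_rpow {s : ℝ} (hs : -1 < s) {a : ℕ → ℝ}
    {a₀ : ℝ} (ha_nonneg : ∀ n, 0 ≤ a n) (ha : Tendsto a atTop (𝓝 a₀)) :
    Tendsto (fun n : ℕ => ∫ u in Ioo (a n) n, u ^ s * (1 - u / n) ^ ((n : ℝ) - s - 1))
      atTop (𝓝 (∫ u in Ioi a₀, u ^ s * exp (-u))) := by
  set φ : ℕ → ℝ → ℝ := fun n u => u ^ s * (1 - u / n) ^ ((n : ℝ) - s - 1)
  have hN : Tendsto (fun n : ℕ => (n : ℝ)) atTop atTop := tendsto_natCast_atTop_atTop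
  have hlhs (n : ℕ) :
      ∫ u in Ioo (a n) n, φ n u = ∫ u in Ioi 0, (Ioo (a n) n).indicator (φ n) u := by
    rw [setIntegral_indicator measurableSet_Ioo,
      inter_eq_right.2 ((Ioo_subset_Ioo_left (ha_nonneg n)).trans Ioo_subset_Ioi_self)]
  have hrhs : ∫ u in Ioi a₀, u ^ s * exp (-u)
      = ∫ u in Ioi 0, (Ioi a₀).indicator (fun u => u ^ s * exp (-u)) u := by
    rw [setIntegral_indicator measurableSet_Ioi,
      inter_eq_right.2 (Ioi_subset_Ioi (ge_of_tendsto' ha ha_nonneg))]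
  rw [hrhs]
  refine (tendsto_congr hlhs).2 ?_
  refine tendsto_integral_filter_of_dominated_convergence (fun u => u ^ s * exp (-(1 / 2) * u))
    (Eventually.of_forall fun n => ((by fun_prop : Measurable (φ n)).indicator
      measurableSet_Ioo).aestronglyMeasurable) ?_ ?_ ?_
  · filter_upwards [hN.eventually_ge_atTop (2 * (s + 1)), hN.eventually_gt_atTop 0]
      with n hn hn0
    filter_upwards [ae_restrict_mem measurableSet_Ioi] with u (hu : 0 < u)
    rw [norm_indicator_eq_indicator_norm]
    refine indicator_apply_le' (fun hmem => ?_) fun _ => by positivity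
    have hun : u / n ≤ 1 := div_le_one_of_le₀ hmem.2.le hn0.le
    rw [norm_mul, norm_of_nonneg (rpow_nonneg hu.le s),
      norm_of_nonneg (rpow_nonneg (sub_nonneg.2 hun) _)]
    exact mul_le_mul_of_nonneg_left
      (one_sub_div_rpow_le_exp_neg_half hn hn0 hu.le hmem.2.le) (rpow_nonneg hu.le s)
  · simpa [IntegrableOn, rpow_one] using
      integrableOn_rpow_mul_exp_neg_mul_rpow (p := 1) (b := 1 / 2) hs zero_lt_one (by norm_num)
  · filter_upwards [ae_restrict_of_ae (Measure.ae_ne volume a₀)] with u hu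
    refine tendsto_indicator_Ioo_of_ne ha hN hu (tendsto_const_nhds.mul ?_)
    simpa only [sub_sub] using tendsto_one_sub_div_rpow_sub u (s + 1)

theorem tendsto_rpow_mul_betaInc {s : ℝ} (hs : -1 < s) {x : ℕ → ℝ} {a₀ : ℝ}
    (hx : ∀ n, x n ∈ Icc (0 : ℝ) 1) (hnx : Tendsto (fun n : ℕ => (n : ℝ) * x n) atTop (𝓝 a₀)) :
    Tendsto (fun n : ℕ => (n : ℝ) ^ (s + 1) * betaInc (s + 1) ((n : ℝ) - s) (x n))
      atTop (𝓝 (incGamma (s + 1) a₀)) := by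
  have hlim := tendsto_setIntegral_Ioo_rpow_mul_one_sub_div_rpow hs
    (fun n => mul_nonneg n.cast_nonneg (hx n).1) hnx
  simp_rw [incGamma, add_sub_cancel_right, mul_comm (exp _)]
  refine hlim.congr' ?_
  filter_upwards [eventually_gt_atTop 0] with n hn
  rw [rpow_mul_betaInc_eq_setIntegral s (Nat.cast_pos.2 hn) (hx n).1 (hx n).2]

theorem contBinomial_tendsto_contPoisson_general (s lam : ℝ) (hs : -1 < s)
    (p : ℕ → ℝ) (hp01 : ∀ n, p n ∈ Set.Ioo (0 : ℝ) 1)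
    (hnp : Tendsto (fun n : ℕ => (n : ℝ) * p n) atTop (nhds lam)) :
    Tendsto (fun n : ℕ => betaInc (s + 1) ((n : ℝ) - s) (p n) / betaFun (s + 1) ((n : ℝ) - s))
      atTop (nhds (incGamma (s + 1) lam / Real.Gamma (s + 1))) := by
  have hinc := tendsto_rpow_mul_betaInc hs (fun n => Ioo_subset_Icc_self (hp01 n)) hnp
  have hfull := tendsto_rpow_mul_betaInc hs (x := fun _ => 0) (a₀ := 0)
    (fun _ => ⟨le_rfl, zero_le_one⟩) (by simp)
  rw [← Gamma_eq_incGamma_zero (by linarith)] at hfull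
  refine (hinc.div hfull (Gamma_pos_of_pos (by linarith)).ne').congr' ?_
  filter_upwards [eventually_gt_atTop 0] with n hn
  rw [Pi.div_apply, betaFun_eq_betaInc_zero,
    mul_div_mul_left _ _ (rpow_pos_of_pos (Nat.cast_pos.2 hn) _).ne']

/-- Poisson limit of the Continuous Binomial: if `n pₙ → λ` and `pₙ → 0`, then
`F_Y^{(n)}(s) = B(s+1, n-s, pₙ)/B(s+1, n-s) → Γ(s+1, λ)/Γ(s+1)`. -/
theorem contBinomial_tendsto_contPoisson (s lam : ℝ) (hs : -1 < s) (hlam : 0 < lam)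
    (p : ℕ → ℝ) (hp01 : ∀ n, p n ∈ Set.Ioo (0 : ℝ) 1)
    (hnp : Tendsto (fun n : ℕ => (n : ℝ) * p n) atTop (nhds lam))
    (hp0 : Tendsto p atTop (nhds 0)) :
    Tendsto (fun n : ℕ => betaInc (s + 1) ((n : ℝ) - s) (p n) / betaFun (s + 1) ((n : ℝ) - s))
      atTop (nhds (incGamma (s + 1) lam / Real.Gamma (s + 1))) :=
  contBinomial_tendsto_contPoisson_general s lam hs p hp01 hnp
end

section
/- If U is uniformly distributed on (0,1) and Y* is an integer-valued random variable independent of U, then for the jittered variable Y = Y* + U - 1 and every α ∈ (0,1), the quantiles satisfy Q_α(Y*) = ⌈Q_α(Y)⌉ whenever Q_α(Y) is not an integer, where Q_α denotes the α-quantile (generalized inverse of the CDF). -/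
open MeasureTheory Set ProbabilityTheory

/-- The `α`-quantile `Q_α(W) = inf {w : P(W ≤ w) ≥ α}`. -/
noncomputable def quantile {Ω : Type*} [MeasurableSpace Ω] (μ : Measure Ω)
    (W : Ω → ℝ) (α : ℝ) : ℝ :=
  sInf {w : ℝ | ENNReal.ofReal α ≤ μ {ω | W ω ≤ w}}

/-!
Almost surely `0 < U < 1`, so `Y* ≤ w` forces `Y ≤ ⌊w⌋` and `Y ≤ w` forces `Y* ≤ ⌈w⌉`.
Hence `w ↦ ⌊w⌋` maps the defining set of `Q_α(Y*)` into that of `Q_α(Y)` and `w ↦ ⌈w⌉` maps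
back. When `Q_α(Y)` is not an integer (in particular, not the junk value `sInf = 0` of an empty
or unbounded set), these two maps pin `Q_α(Y*)` to `⌈Q_α(Y)⌉`.
-/

theorem Real.sInf_eq_ceil_sInf_of_floor_mem_of_ceil_mem {S T : Set ℝ} (hS : IsUpperSet S)
    (floor_mem : ∀ w ∈ S, (⌊w⌋ : ℝ) ∈ T) (ceil_mem : ∀ w ∈ T, (⌈w⌉ : ℝ) ∈ S)
    (hT : sInf T ∉ range (Int.cast : ℤ → ℝ)) :
    sInf S = ⌈sInf T⌉ := by
  have hTne : T.Nonempty := by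
    by_contra h
    exact hT ⟨0, by simp [not_nonempty_iff_eq_empty.mp h]⟩
  have hTbdd : BddBelow T := by
    by_contra h
    exact hT ⟨0, by simp [Real.sInf_of_not_bddBelow h]⟩
  have hlt : sInf T < ⌈sInf T⌉ := (Int.le_ceil _).lt_of_ne fun h => hT ⟨_, h.symm⟩
  have hceil_mem : (⌈sInf T⌉ : ℝ) ∈ S := by
    obtain ⟨w, hwT, hw⟩ := exists_lt_of_csInf_lt hTne hlt
    exact hS (by exact_mod_cast Int.ceil_le.mpr hw.le) (ceil_mem w hwT)
  have hle : ∀ w ∈ S, (⌈sInf T⌉ : ℝ) ≤ w := fun w hw =>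
    calc (⌈sInf T⌉ : ℝ) ≤ ⌊w⌋ := by
          exact_mod_cast Int.ceil_le.mpr (csInf_le hTbdd (floor_mem w hw))
      _ ≤ w := Int.floor_le w
  exact le_antisymm (csInf_le ⟨_, hle⟩ hceil_mem) (le_csInf ⟨_, hceil_mem⟩ hle)

section Jitter

variable {Ω : Type*} [MeasurableSpace Ω] {μ : Measure Ω} {Ystar : Ω → ℤ} {U : Ω → ℝ}

theorem isUpperSet_setOf_le_measure_le (c : ENNReal) (W : Ω → ℝ) :
    IsUpperSet {w : ℝ | c ≤ μ {ω | W ω ≤ w}} :=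
  fun _ _ hvw hv => hv.trans (measure_mono fun _ hω => le_trans hω hvw)

theorem measure_le_le_measure_jitter_le_floor (hU : ∀ᵐ ω ∂μ, U ω ≤ 1) (w : ℝ) :
    μ {ω | (Ystar ω : ℝ) ≤ w} ≤ μ {ω | (Ystar ω : ℝ) + U ω - 1 ≤ ⌊w⌋} := by
  refine measure_mono_ae (hU.mono fun ω hUω hω => ?_)
  have : (Ystar ω : ℝ) ≤ ⌊w⌋ := by exact_mod_cast Int.le_floor.mpr hω
  change _ ≤ _
  linarith

theorem measure_jitter_le_le_measure_le_ceil (hU : ∀ᵐ ω ∂μ, 0 < U ω) (w : ℝ) :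
    μ {ω | (Ystar ω : ℝ) + U ω - 1 ≤ w} ≤ μ {ω | (Ystar ω : ℝ) ≤ ⌈w⌉} := by
  refine measure_mono_ae (hU.mono fun ω hUω (hω : _ ≤ w) => ?_)
  have : Ystar ω - 1 < ⌈w⌉ := Int.lt_ceil.mpr (by push_cast; linarith)
  change ((Ystar ω : ℤ) : ℝ) ≤ ((⌈w⌉ : ℤ) : ℝ)
  exact_mod_cast (by omega : Ystar ω ≤ ⌈w⌉)

end Jitter

theorem jittered_quantile_eq_ceil_general
    {Ω : Type*} [MeasurableSpace Ω] (μ : Measure Ω)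
    (Ystar : Ω → ℤ) (U : Ω → ℝ)
    (hUmeas : Measurable U)
    (hU : Measure.map U μ = volume.restrict (Set.Ioo (0 : ℝ) 1))
    (α : ℝ)
    (hnotint : quantile μ (fun ω => (Ystar ω : ℝ) + U ω - 1) α ∉
      Set.range (Int.cast : ℤ → ℝ)) :
    quantile μ (fun ω => (Ystar ω : ℝ)) α =
      (⌈quantile μ (fun ω => (Ystar ω : ℝ) + U ω - 1) α⌉ : ℝ) := by
  have hU01 : ∀ᵐ ω ∂μ, U ω ∈ Ioo (0 : ℝ) 1 :=
    ae_of_ae_map hUmeas.aemeasurable (hU ▸ ae_restrict_mem measurableSet_Ioo)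
  refine Real.sInf_eq_ceil_sInf_of_floor_mem_of_ceil_mem
    (isUpperSet_setOf_le_measure_le _ _) (fun w hw => ?_) (fun w hw => ?_) hnotint
  · exact hw.trans (measure_le_le_measure_jitter_le_floor (hU01.mono fun _ h => h.2.le) w)
  · exact hw.trans (measure_jitter_le_le_measure_le_ceil (hU01.mono fun _ h => h.1) w)

/-- Jittering: if `U ~ Uniform(0,1)` is independent of the integer-valued `Y*`
and `Y = Y* + U - 1`, then for every `α ∈ (0,1)`, whenever `Q_α(Y)` is not an
integer, `Q_α(Y*) = ⌈Q_α(Y)⌉`. -/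
theorem jittered_quantile_eq_ceil
    {Ω : Type*} [MeasurableSpace Ω] (μ : Measure Ω) [IsProbabilityMeasure μ]
    (Ystar : Ω → ℤ) (U : Ω → ℝ)
    (hYmeas : Measurable fun ω => (Ystar ω : ℝ)) (hUmeas : Measurable U)
    (hU : Measure.map U μ = volume.restrict (Set.Ioo (0 : ℝ) 1))
    (hindep : IndepFun (fun ω => (Ystar ω : ℝ)) U μ)
    (α : ℝ) (hα : α ∈ Set.Ioo (0 : ℝ) 1)
    (hnotint : quantile μ (fun ω => (Ystar ω : ℝ) + U ω - 1) α ∉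
      Set.range (Int.cast : ℤ → ℝ)) :
    quantile μ (fun ω => (Ystar ω : ℝ)) α =
      (⌈quantile μ (fun ω => (Ystar ω : ℝ) + U ω - 1) α⌉ : ℝ) :=
  jittered_quantile_eq_ceil_general μ Ystar U hUmeas hU α hnotint
end
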